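/- Suppose input parent IOD graph G is partially actionable, output parent IOD graph G' is very actionable, and both satisfy the no dangling nodes condition. Then any crossover child produced from an input-contiguous IO partition (Ψ,Ω) of G and an output-contiguous IO partition (Ψ',Ω') of G' (the partitions being crossover compatible) is very actionable: for every output o' ∈ O' there is a directed path in the child from some input in I to o'. -/

import Mathlib

/-- An Input/Output Directed (IOD) graph: a set of nodes `N` inside a common
vertex type `V`, a set of directed edges `E ⊆ N × N`, and disjoint subsets
`I, O ⊆ N` (inputs and outputs) such that no edge ends at a node of `I`
and no edge starts at a node of `O`. -/
structure IODGraph (V : Type) where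
  N : Set V
  E : Set (V × V)
  I : Set V
  O : Set V
  I_sub : I ⊆ N
  O_sub : O ⊆ N
  disjIO : Disjoint I O
  E_mem : ∀ e ∈ E, e.1 ∈ N ∧ e.2 ∈ N
  no_into_I : ∀ e ∈ E, e.2 ∉ I
  no_outof_O : ∀ e ∈ E, e.1 ∉ O

namespace IODGraph

variable {V : Type}

/-- `G.Reach a b`: there is a directed path (possibly trivial) from `a` to `b` in `G`. -/
def Reach (G : IODGraph V) : V → V → Prop :=
  Relation.ReflTransGen (fun x y => (x, y) ∈ G.E)

/-- Reachability by a directed path lying entirely within the set `S`. -/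
def ReachWithin (G : IODGraph V) (S : Set V) : V → V → Prop :=
  Relation.ReflTransGen (fun x y => (x, y) ∈ G.E ∧ x ∈ S ∧ y ∈ S)

/-- `n` lies on a directed path from some input to some output. -/
def OnIOPath (G : IODGraph V) (n : V) : Prop :=
  ∃ i ∈ G.I, ∃ o ∈ G.O, G.Reach i n ∧ G.Reach n o

/-- The no dangling nodes condition: every intermediate node lies on a
directed path from some input to some output. -/
def NoDangling (G : IODGraph V) : Prop :=
  ∀ n ∈ G.N \ (G.I ∪ G.O), G.OnIOPath n

/-- Partially informative: a path from some input to some output. -/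
def PartiallyInformative (G : IODGraph V) : Prop :=
  ∃ i ∈ G.I, ∃ o ∈ G.O, G.Reach i o

/-- Very informative: from every input there is a path to some output. -/
def VeryInformative (G : IODGraph V) : Prop :=
  ∀ i ∈ G.I, ∃ o ∈ G.O, G.Reach i o

/-- Fully informative: for every input and every output there is a path. -/
def FullyInformative (G : IODGraph V) : Prop :=
  ∀ i ∈ G.I, ∀ o ∈ G.O, G.Reach i o

/-- Non-informative: no path from any input to any output. -/
def NonInformative (G : IODGraph V) : Prop :=
  ∀ i ∈ G.I, ∀ o ∈ G.O, ¬ G.Reach i o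

/-- Partially actionable: a path from some input to some output. -/
def PartiallyActionable (G : IODGraph V) : Prop :=
  ∃ i ∈ G.I, ∃ o ∈ G.O, G.Reach i o

/-- Very actionable: for every output there is a path from some input to it. -/
def VeryActionable (G : IODGraph V) : Prop :=
  ∀ o ∈ G.O, ∃ i ∈ G.I, G.Reach i o

/-- Fully actionable: for every input and every output there is a path. -/
def FullyActionable (G : IODGraph V) : Prop :=
  ∀ i ∈ G.I, ∀ o ∈ G.O, G.Reach i o

/-- An IO partition `(Ψ, Ω)` of the node set of `G`, with `I ⊆ Ψ` and `O ⊆ Ω`. -/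
structure IOPartition (G : IODGraph V) where
  Psi : Set V
  Om : Set V
  union_eq : Psi ∪ Om = G.N
  disj : Disjoint Psi Om
  I_sub : G.I ⊆ Psi
  O_sub : G.O ⊆ Om

/-- Forward links of an IO partition: edges from `Ψ` to `Ω`. -/
def Fwd (G : IODGraph V) (P : IOPartition G) : Set (V × V) :=
  {e | e ∈ G.E ∧ e.1 ∈ P.Psi ∧ e.2 ∈ P.Om}

/-- Backward links of an IO partition: edges from `Ω` to `Ψ`. -/
def Bwd (G : IODGraph V) (P : IOPartition G) : Set (V × V) :=
  {e | e ∈ G.E ∧ e.1 ∈ P.Om ∧ e.2 ∈ P.Psi}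

/-- The input part `Ψ` is contiguous: every non-input node of `Ψ` is reached
from some input by a path inside `Ψ`. -/
def InputContiguous (G : IODGraph V) (P : IOPartition G) : Prop :=
  ∀ n ∈ P.Psi \ G.I, ∃ i ∈ G.I, G.ReachWithin P.Psi i n

/-- The output part `Ω` is contiguous: every non-output node of `Ω` reaches
some output by a path inside `Ω`. -/
def OutputContiguous (G : IODGraph V) (P : IOPartition G) : Prop :=
  ∀ n ∈ P.Om \ G.O, ∃ o ∈ G.O, G.ReachWithin P.Om n o

/-- Crossover compatibility of two IOD graphs with chosen IO partitions. -/
structure CrossCompat (G G' : IODGraph V) (P : IOPartition G) (P' : IOPartition G') : Prop where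
  psi_om' : P.Psi ∩ P'.Om = ∅
  psi'_om : P'.Psi ∩ P.Om = ∅
  finF : (Fwd G P).Finite
  finF' : (Fwd G' P').Finite
  finB : (Bwd G P).Finite
  finB' : (Bwd G' P').Finite
  cardF : (Fwd G P).ncard = (Fwd G' P').ncard
  cardB : (Bwd G P).ncard = (Bwd G' P').ncard

/-- The crossover membrane induced by bijections `g : F(Ψ,Ω) ≃ F(Ψ',Ω')` and
`h : B(Ψ',Ω') ≃ B(Ψ,Ω)`: the edges `(source of f, destination of g f)` for
forward links `f`, and `(source of b', destination of h b')` for backward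
links `b'` of the output parent. -/
def membraneEdges (G G' : IODGraph V) (P : IOPartition G) (P' : IOPartition G')
    (g : Fwd G P ≃ Fwd G' P') (h : Bwd G' P' ≃ Bwd G P) : Set (V × V) :=
  (Set.range fun f : Fwd G P => ((f : V × V).1, (g f : V × V).2)) ∪
  (Set.range fun b' : Bwd G' P' => ((b' : V × V).1, (h b' : V × V).2))

/-- The edge set of the crossover child: edges of `G` within `Ψ`, edges of `G'`
within `Ω'`, and the crossover membrane. -/
def childEdges (G G' : IODGraph V) (P : IOPartition G) (P' : IOPartition G')
    (g : Fwd G P ≃ Fwd G' P') (h : Bwd G' P' ≃ Bwd G P) : Set (V × V) :=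
  {e | e ∈ G.E ∧ e.1 ∈ P.Psi ∧ e.2 ∈ P.Psi} ∪
  {e | e ∈ G'.E ∧ e.1 ∈ P'.Om ∧ e.2 ∈ P'.Om} ∪
  membraneEdges G G' P P' g h

/-- Reachability (directed paths) in the crossover child. -/
def childReach (G G' : IODGraph V) (P : IOPartition G) (P' : IOPartition G')
    (g : Fwd G P ≃ Fwd G' P') (h : Bwd G' P' ≃ Bwd G P) : V → V → Prop :=
  Relation.ReflTransGen (fun x y => (x, y) ∈ childEdges G G' P P' g h)

end IODGraph

open IODGraph

/-!
Take `o' ∈ O'` and a path in `G'` from an input `i'` to `o'`. Since `i' ∈ Ψ'` and `o' ∈ Ω'`, the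
path has a last edge entering `Ω'`; it is a forward link `f'` of `G'`, and the rest of the path
stays in `Ω'`, so it survives in the child. The membrane edge built from `f := g⁻¹ f'` joins the
source of `f`, a node of `Ψ`, to the destination of `f'`. By input contiguity that source is reached
from an input of `G` by a path inside `Ψ`, which also survives in the child.
-/

namespace IODGraph

variable {V : Type}

theorem ReachWithin.mono_rel {G : IODGraph V} {S : Set V} {r : V → V → Prop}
    (hr : ∀ a b, (a, b) ∈ G.E → a ∈ S → b ∈ S → r a b) {x y : V}
    (hxy : G.ReachWithin S x y) : Relation.ReflTransGen r x y :=
  Relation.ReflTransGen.mono (fun a b ⟨hab, ha, hb⟩ => hr a b hab ha hb) _ _ hxy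

theorem Reach.reachWithin_or_exists_edge_into {G : IODGraph V} {S : Set V} {x o : V}
    (hxo : G.Reach x o) (ho : o ∈ S) :
    (x ∈ S ∧ G.ReachWithin S x o) ∨ ∃ e ∈ G.E, e.1 ∉ S ∧ e.2 ∈ S ∧ G.ReachWithin S e.2 o := by
  induction hxo using Relation.ReflTransGen.head_induction_on with
  | refl => exact Or.inl ⟨ho, .refl⟩
  | @head a b hab _ ih =>
    rcases ih with ⟨hb, hbo⟩ | hedge
    · by_cases ha : a ∈ S
      · exact Or.inl ⟨ha, .head ⟨hab, ha, hb⟩ hbo⟩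
      · exact Or.inr ⟨(a, b), hab, ha, hb, hbo⟩
    · exact Or.inr hedge

theorem Reach.exists_edge_into_reachWithin {G : IODGraph V} {S : Set V} {x o : V}
    (hxo : G.Reach x o) (hx : x ∉ S) (ho : o ∈ S) :
    ∃ e ∈ G.E, e.1 ∉ S ∧ e.2 ∈ S ∧ G.ReachWithin S e.2 o :=
  (hxo.reachWithin_or_exists_edge_into ho).resolve_left fun h => hx h.1

theorem Reach.exists_fwd_reachWithin_om {G : IODGraph V} (P : IOPartition G) {x o : V}
    (hxo : G.Reach x o) (hx : x ∈ P.Psi) (ho : o ∈ P.Om) :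
    ∃ f ∈ Fwd G P, G.ReachWithin P.Om f.2 o := by
  obtain ⟨e, he, he₁, he₂, heo⟩ :=
    hxo.exists_edge_into_reachWithin (Set.disjoint_left.mp P.disj hx) ho
  have he₁N : e.1 ∈ P.Psi ∪ P.Om := P.union_eq ▸ (G.E_mem e he).1
  exact ⟨e, ⟨he, he₁N.resolve_right he₁, he₂⟩, heo⟩

theorem InputContiguous.exists_input_reachWithin {G : IODGraph V} {P : IOPartition G}
    (hIC : InputContiguous G P) {n : V} (hn : n ∈ P.Psi) :
    ∃ i ∈ G.I, G.ReachWithin P.Psi i n := by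
  by_cases hnI : n ∈ G.I
  · exact ⟨n, hnI, .refl⟩
  · exact hIC n ⟨hn, hnI⟩

section Child

variable {G G' : IODGraph V} {P : IOPartition G} {P' : IOPartition G'}
  (g : Fwd G P ≃ Fwd G' P') (h : Bwd G' P' ≃ Bwd G P)

theorem ReachWithin.childReach_of_psi {a b : V} (hab : G.ReachWithin P.Psi a b) :
    childReach G G' P P' g h a b :=
  hab.mono_rel fun _ _ he ha hb => Or.inl (Or.inl ⟨he, ha, hb⟩)

theorem ReachWithin.childReach_of_om' {a b : V} (hab : G'.ReachWithin P'.Om a b) :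
    childReach G G' P P' g h a b :=
  hab.mono_rel fun _ _ he ha hb => Or.inl (Or.inr ⟨he, ha, hb⟩)

theorem childReach_fwd_source_dest (f : Fwd G P) :
    childReach G G' P P' g h (f : V × V).1 (g f : V × V).2 :=
  .single (Or.inr (Or.inl ⟨f, rfl⟩))

end Child

end IODGraph

theorem crossover_child_very_actionable_general {V : Type} (G G' : IODGraph V)
    (hG' : VeryActionable G')
    (P : IOPartition G) (P' : IOPartition G')
    (hIC : InputContiguous G P)
    (g : Fwd G P ≃ Fwd G' P') (h : Bwd G' P' ≃ Bwd G P) :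
    ∀ o' ∈ G'.O, ∃ i ∈ G.I, childReach G G' P P' g h i o' := by
  intro o' ho'
  obtain ⟨i', hi', hi'o'⟩ := hG' o' ho'
  obtain ⟨f', hf', hf'o'⟩ := hi'o'.exists_fwd_reachWithin_om P' (P'.I_sub hi') (P'.O_sub ho')
  set f : Fwd G P := g.symm ⟨f', hf'⟩ with hf
  obtain ⟨i, hi, hif⟩ := hIC.exists_input_reachWithin f.2.2.1
  have hmembrane : childReach G G' P P' g h (f : V × V).1 f'.2 := by
    simpa [hf] using childReach_fwd_source_dest g h f
  exact ⟨i, hi, (hif.childReach_of_psi g h).trans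
    (hmembrane.trans (hf'o'.childReach_of_om' g h))⟩

/-- a partially actionable input parent and a very actionable
output parent, both satisfying the no dangling nodes condition, crossed over
along an input-contiguous partition of the input parent and an
output-contiguous partition of the output parent, yield a very actionable
child: every output in `O'` is reached from some input in `I`. -/
theorem crossover_child_very_actionable {V : Type} (G G' : IODGraph V)
    (hG : PartiallyActionable G) (hG' : VeryActionable G')
    (hdG : NoDangling G) (hdG' : NoDangling G')
    (P : IOPartition G) (P' : IOPartition G')
    (hIC : InputContiguous G P) (hOC : OutputContiguous G' P')
    (hc : CrossCompat G G' P P')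
    (g : Fwd G P ≃ Fwd G' P') (h : Bwd G' P' ≃ Bwd G P) :
    ∀ o' ∈ G'.O, ∃ i ∈ G.I, childReach G G' P P' g h i o' :=
  crossover_child_very_actionable_general G G' hG' P P' hIC g h
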